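/- Under the change of variables α = v/2 + √ρ, β = v/2 - √ρ (ρ > 0), smooth solutions of the system ρ_t + ((3/4)ρ² + (3/4)ρv²)_x = 0, (ρv)_t + ((3/2)ρ²v + (3/4)ρv³)_x = 0 correspond to solutions of the diagonal system α_t + (3/8)(5α² + 2αβ + β²)α_x = 0, β_t + (3/8)(α² + 2αβ + 5β²)β_x = 0. -/

import Mathlib

/-!
Write `s = √ρ` and let `E₁`, `E₂` be the mass and momentum laws expanded by the chain rule, `A`, `B`
the left-hand sides of the `α`- and `β`-equations. Since `∇α` and `∇β` (in the conserved variables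
`(ρ, ρv)`) are left eigenvectors of the flux Jacobian, `A = (E₂ + (s - v) E₁) / (2s²)` and
`B = (E₂ - (s + v) E₁) / (2s²)`; inversely `E₁ = s (A - B)` and `E₂ = s ((s + v) A + (s - v) B)`.
This change of basis has determinant `2s³ ≠ 0`, so the two systems vanish together.
-/

open Real

lemma eq_zero_and_eq_zero_iff_of_combination {E₁ E₂ A B s u : ℝ} (hs : s ≠ 0)
    (h₁ : E₁ = s * (A - B)) (h₂ : E₂ = s * ((s + u) * A + (s - u) * B)) :
    E₁ = 0 ∧ E₂ = 0 ↔ A = 0 ∧ B = 0 := by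
  subst h₁ h₂
  simp only [mul_eq_zero, hs, false_or]
  constructor
  · rintro ⟨hAB, hsum⟩
    have h2sA : (2 * s) * A = 0 := by linear_combination hsum + (s - u) * hAB
    have hA : A = 0 := (mul_eq_zero.mp h2sA).resolve_left (by simpa using hs)
    exact ⟨hA, by linear_combination hA - hAB⟩
  · rintro ⟨rfl, rfl⟩
    constructor <;> ring

lemma mkdv_linearized_iff_diagonal {ρ v ρx ρt vx vt : ℝ} (hρ : 0 < ρ) :
    (ρt + ((3/2) * ρ * ρx + (3/4) * v^2 * ρx + (3/2) * ρ * v * vx) = 0 ∧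
      ρt * v + ρ * vt
        + (3 * ρ * v * ρx + (3/2) * ρ^2 * vx + (3/4) * v^3 * ρx + (9/4) * ρ * v^2 * vx) = 0)
    ↔
    (vt / 2 + ρt / (2 * √ρ)
        + (3/8) * (5 * (v/2 + √ρ)^2 + 2 * (v/2 + √ρ) * (v/2 - √ρ) + (v/2 - √ρ)^2)
          * (vx / 2 + ρx / (2 * √ρ)) = 0 ∧
      vt / 2 - ρt / (2 * √ρ)
        + (3/8) * ((v/2 + √ρ)^2 + 2 * (v/2 + √ρ) * (v/2 - √ρ) + 5 * (v/2 - √ρ)^2)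
          * (vx / 2 - ρx / (2 * √ρ)) = 0) := by
  obtain ⟨s, hs, rfl⟩ : ∃ s, 0 < s ∧ ρ = s^2 := ⟨√ρ, sqrt_pos.mpr hρ, (sq_sqrt hρ.le).symm⟩
  rw [sqrt_sq hs.le]
  exact eq_zero_and_eq_zero_iff_of_combination (u := v) hs.ne'
    (by field_simp; ring) (by field_simp; ring)

section

variable {f g : ℝ → ℝ} {f' g' a : ℝ}

lemma HasDerivAt.div_two_add_sqrt (hg : HasDerivAt g g' a) (hf : HasDerivAt f f' a)
    (hfa : f a ≠ 0) :
    HasDerivAt (fun s => g s / 2 + √(f s)) (g' / 2 + f' / (2 * √(f a))) a :=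
  (hg.div_const 2).add (hf.sqrt hfa)

lemma HasDerivAt.div_two_sub_sqrt (hg : HasDerivAt g g' a) (hf : HasDerivAt f f' a)
    (hfa : f a ≠ 0) :
    HasDerivAt (fun s => g s / 2 - √(f s)) (g' / 2 - f' / (2 * √(f a))) a :=
  (hg.div_const 2).sub (hf.sqrt hfa)

end

section

variable (ρ v : ℝ → ℝ → ℝ) (x t : ℝ)

def MkdvConservationLawsAt : Prop :=
  deriv (fun s => ρ x s) t
      + deriv (fun y => (3/4) * (ρ y t)^2 + (3/4) * ρ y t * (v y t)^2) x = 0 ∧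
    deriv (fun s => ρ x s * v x s) t
      + deriv (fun y => (3/2) * (ρ y t)^2 * v y t + (3/4) * ρ y t * (v y t)^3) x = 0

def MkdvRiemannSystemAt : Prop :=
  deriv (fun s => v x s / 2 + √(ρ x s)) t
      + (3/8) * (5 * (v x t / 2 + √(ρ x t))^2
          + 2 * (v x t / 2 + √(ρ x t)) * (v x t / 2 - √(ρ x t))
          + (v x t / 2 - √(ρ x t))^2)
        * deriv (fun y => v y t / 2 + √(ρ y t)) x = 0 ∧
    deriv (fun s => v x s / 2 - √(ρ x s)) t
      + (3/8) * ((v x t / 2 + √(ρ x t))^2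
          + 2 * (v x t / 2 + √(ρ x t)) * (v x t / 2 - √(ρ x t))
          + 5 * (v x t / 2 - √(ρ x t))^2)
        * deriv (fun y => v y t / 2 - √(ρ y t)) x = 0

variable {ρ v x t}

lemma mkdvConservationLawsAt_iff_riemannSystemAt {ρx ρt vx vt : ℝ}
    (hρx : HasDerivAt (fun y => ρ y t) ρx x) (hρt : HasDerivAt (fun s => ρ x s) ρt t)
    (hvx : HasDerivAt (fun y => v y t) vx x) (hvt : HasDerivAt (fun s => v x s) vt t)
    (hpos : 0 < ρ x t) :
    MkdvConservationLawsAt ρ v x t ↔ MkdvRiemannSystemAt ρ v x t := by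
  have hmass_flux : HasDerivAt (fun y => (3/4) * (ρ y t)^2 + (3/4) * ρ y t * (v y t)^2)
      ((3/2) * ρ x t * ρx + (3/4) * (v x t)^2 * ρx + (3/2) * ρ x t * v x t * vx) x :=
    (((hρx.fun_pow 2).const_mul (3/4 : ℝ)).add
      ((hρx.const_mul (3/4 : ℝ)).mul (hvx.fun_pow 2))).congr_deriv (by ring)
  have hmomentum_flux :
      HasDerivAt (fun y => (3/2) * (ρ y t)^2 * v y t + (3/4) * ρ y t * (v y t)^3)
        (3 * ρ x t * v x t * ρx + (3/2) * (ρ x t)^2 * vx + (3/4) * (v x t)^3 * ρx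
          + (9/4) * ρ x t * (v x t)^2 * vx) x :=
    ((((hρx.fun_pow 2).const_mul (3/2 : ℝ)).mul hvx).add
      ((hρx.const_mul (3/4 : ℝ)).mul (hvx.fun_pow 3))).congr_deriv (by ring)
  have hmomentum : HasDerivAt (fun s => ρ x s * v x s) (ρt * v x t + ρ x t * vt) t :=
    hρt.mul hvt
  have hne : ρ x t ≠ 0 := hpos.ne'
  unfold MkdvConservationLawsAt MkdvRiemannSystemAt
  rw [hρt.deriv, hmass_flux.deriv, hmomentum.deriv, hmomentum_flux.deriv,
    (hvt.div_two_add_sqrt hρt hne).deriv, (hvx.div_two_add_sqrt hρx hne).deriv,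
    (hvt.div_two_sub_sqrt hρt hne).deriv, (hvx.div_two_sub_sqrt hρx hne).deriv]
  exact mkdv_linearized_iff_diagonal hpos

end

theorem mkdv_riemann_invariants (ρ v : ℝ → ℝ → ℝ)
    (hρ : ContDiff ℝ 1 (fun p : ℝ × ℝ => ρ p.1 p.2))
    (hv : ContDiff ℝ 1 (fun p : ℝ × ℝ => v p.1 p.2))
    (hpos : ∀ x t, 0 < ρ x t) :
    (∀ x t : ℝ,
        deriv (fun s => ρ x s) t
          + deriv (fun y => (3/4) * (ρ y t)^2 + (3/4) * ρ y t * (v y t)^2) x = 0 ∧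
        deriv (fun s => ρ x s * v x s) t
          + deriv (fun y => (3/2) * (ρ y t)^2 * v y t + (3/4) * ρ y t * (v y t)^3) x = 0)
    ↔
    (∀ x t : ℝ,
        deriv (fun s => v x s / 2 + Real.sqrt (ρ x s)) t
          + (3/8) * (5 * (v x t / 2 + Real.sqrt (ρ x t))^2
              + 2 * (v x t / 2 + Real.sqrt (ρ x t)) * (v x t / 2 - Real.sqrt (ρ x t))
              + (v x t / 2 - Real.sqrt (ρ x t))^2)
            * deriv (fun y => v y t / 2 + Real.sqrt (ρ y t)) x = 0 ∧
        deriv (fun s => v x s / 2 - Real.sqrt (ρ x s)) t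
          + (3/8) * ((v x t / 2 + Real.sqrt (ρ x t))^2
              + 2 * (v x t / 2 + Real.sqrt (ρ x t)) * (v x t / 2 - Real.sqrt (ρ x t))
              + 5 * (v x t / 2 - Real.sqrt (ρ x t))^2)
            * deriv (fun y => v y t / 2 - Real.sqrt (ρ y t)) x = 0) := by
  have slice_x {f : ℝ → ℝ → ℝ} (hf : ContDiff ℝ 1 (fun p : ℝ × ℝ => f p.1 p.2)) (x t : ℝ) :
      HasDerivAt (fun y => f y t) (deriv (fun y => f y t) x) x :=
    ((hf.comp (contDiff_prodMk_left t)).differentiable one_ne_zero x).hasDerivAt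
  have slice_t {f : ℝ → ℝ → ℝ} (hf : ContDiff ℝ 1 (fun p : ℝ × ℝ => f p.1 p.2)) (x t : ℝ) :
      HasDerivAt (fun s => f x s) (deriv (fun s => f x s) t) t :=
    ((hf.comp (contDiff_prodMk_right x)).differentiable one_ne_zero t).hasDerivAt
  exact forall₂_congr fun x t => mkdvConservationLawsAt_iff_riemannSystemAt
    (slice_x hρ x t) (slice_t hρ x t) (slice_x hv x t) (slice_t hv x t) (hpos x t)
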